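/- Assume μa ≥ 1 and a ≥ 1, and let x̄ = x̄(μ,a) be a solution of q(x̄,μ,a) = 1 − 1/(μa). Then the de Almeida–Thouless quantity AT(μ,a) = μ 𝔼 cosh⁻⁴(z√(μ q(x̄,μ,a)) + μξ x̄) satisfies AT(μ,a) ≤ 1/a ≤ 1. -/

import Mathlib

/-! Pointwise `cosh⁻⁴ ≤ cosh⁻² = 1 - tanh²`, so integrating against the Gaussian law and using the
fixed-point equation `q̄ = 𝔼 tanh²` gives `AT ≤ μ (1 - q̄)`, which equals `1/a` at `q̄ = 1 - 1/(μa)`. -/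

open MeasureTheory ProbabilityTheory

noncomputable section

def rsRHS (μ a x q : ℝ) : ℝ :=
  ∫ p : ℝ × ℝ, Real.tanh (p.1 * Real.sqrt (μ * q) + μ * p.2 * x) ^ 2
    ∂((gaussianReal 0 1).prod (gaussianReal 0 a.toNNReal))

namespace Real

lemma one_sub_tanh_sq (x : ℝ) : 1 - tanh x ^ 2 = (cosh x ^ 2)⁻¹ := by
  rw [tanh_eq_sinh_div_cosh, div_pow]
  field_simp
  exact cosh_sq_sub_sinh_sq x

lemma continuous_tanh : Continuous tanh := by
  simp_rw [funext tanh_eq_sinh_div_cosh]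
  exact continuous_sinh.div continuous_cosh fun x => (cosh_pos x).ne'

lemma cosh_zpow_neg_four_le_one_sub_tanh_sq (x : ℝ) :
    cosh x ^ (-4 : ℤ) ≤ 1 - tanh x ^ 2 := by
  have hinv_le_one : (cosh x ^ 2)⁻¹ ≤ 1 := inv_le_one_of_one_le₀ (one_le_pow₀ (one_le_cosh x))
  calc cosh x ^ (-4 : ℤ) = ((cosh x ^ 2)⁻¹) ^ 2 := by
        rw [inv_pow, ← pow_mul, ← zpow_natCast, ← zpow_neg]; rfl
    _ ≤ (cosh x ^ 2)⁻¹ := pow_le_of_le_one (by positivity) hinv_le_one two_ne_zero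
    _ = 1 - tanh x ^ 2 := (one_sub_tanh_sq x).symm

lemma cosh_zpow_neg_four_le_one (x : ℝ) : cosh x ^ (-4 : ℤ) ≤ 1 :=
  (cosh_zpow_neg_four_le_one_sub_tanh_sq x).trans (by linarith [sq_nonneg (tanh x)])

end Real

open Real in
lemma integral_cosh_zpow_neg_four_le {α : Type*} [MeasurableSpace α] (ν : Measure α)
    [IsProbabilityMeasure ν] {L : α → ℝ} (hL : AEMeasurable L ν) :
    ∫ p, cosh (L p) ^ (-4 : ℤ) ∂ν ≤ 1 - ∫ p, tanh (L p) ^ 2 ∂ν := by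
  have hcosh : Integrable (fun p => cosh (L p) ^ (-4 : ℤ)) ν := by
    refine Integrable.of_bound ?_ 1 (Filter.Eventually.of_forall fun p => ?_)
    · exact ((continuous_cosh.zpow₀ _ fun x => Or.inl (cosh_pos x).ne').measurable.comp_aemeasurable
        hL).aestronglyMeasurable
    · rw [norm_of_nonneg (by positivity)]
      exact cosh_zpow_neg_four_le_one (L p)
  have htanh : Integrable (fun p => tanh (L p) ^ 2) ν := by
    refine Integrable.of_bound ?_ 1 (Filter.Eventually.of_forall fun p => ?_)
    · exact ((continuous_tanh.pow 2).measurable.comp_aemeasurable hL).aestronglyMeasurable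
    · rw [norm_of_nonneg (sq_nonneg _)]
      exact (tanh_sq_lt_one (L p)).le
  calc ∫ p, cosh (L p) ^ (-4 : ℤ) ∂ν ≤ ∫ p, (1 - tanh (L p) ^ 2) ∂ν :=
        integral_mono hcosh ((integrable_const 1).sub htanh)
          fun p => cosh_zpow_neg_four_le_one_sub_tanh_sq (L p)
    _ = 1 - ∫ p, tanh (L p) ^ 2 ∂ν := by
        rw [integral_sub (integrable_const 1) htanh, integral_const, probReal_univ, one_smul]

theorem AT_le_one_general
    (μ a : ℝ) (hμ : 0 < μ) (ha1 : 1 ≤ a)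
    (xbar qbar : ℝ)
    (hcons : qbar = rsRHS μ a xbar qbar)
    (hcrit : qbar = 1 - 1 / (μ * a)) :
    μ * ∫ p : ℝ × ℝ,
        (Real.cosh (p.1 * Real.sqrt (μ * qbar) + μ * p.2 * xbar)) ^ (-4 : ℤ)
        ∂((gaussianReal 0 1).prod (gaussianReal 0 a.toNNReal))
      ≤ 1 / a ∧ 1 / a ≤ 1 := by
  refine ⟨?_, div_le_one_of_le₀ ha1 (zero_le_one.trans ha1)⟩
  calc _ ≤ μ * (1 - rsRHS μ a xbar qbar) :=
        mul_le_mul_of_nonneg_left (integral_cosh_zpow_neg_four_le _ (by fun_prop)) hμ.le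
    _ = μ * (1 - qbar) := by rw [← hcons]
    _ = 1 / a := by rw [hcrit]; field_simp; ring

/-- The de Almeida–Thouless quantity at the critical point:
if `μa ≥ 1`, `a ≥ 1` and `q̄ = q(x̄,μ,a) = 1 - 1/(μa)`, then
`AT(μ,a) = μ 𝔼 cosh⁻⁴(z√(μq̄) + μξx̄) ≤ 1/a ≤ 1`. -/
theorem AT_le_one
    (μ a : ℝ) (hμ : 0 < μ) (ha : 0 < a) (hμa : 1 ≤ μ * a) (ha1 : 1 ≤ a)
    (xbar qbar : ℝ) (hqbar : qbar ∈ Set.Icc (0 : ℝ) 1)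
    (hcons : qbar = rsRHS μ a xbar qbar)
    (hcrit : qbar = 1 - 1 / (μ * a)) :
    μ * ∫ p : ℝ × ℝ,
        (Real.cosh (p.1 * Real.sqrt (μ * qbar) + μ * p.2 * xbar)) ^ (-4 : ℤ)
        ∂((gaussianReal 0 1).prod (gaussianReal 0 a.toNNReal))
      ≤ 1 / a ∧ 1 / a ≤ 1 :=
  AT_le_one_general μ a hμ ha1 xbar qbar hcons hcrit

end
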